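/- arXiv:1812.05650 — 3 statements merged into one kernel-verified Lean document; each statement's English description precedes it below -/
import Mathlib

section
/- Let G be a graph in which every vertex has odd degree and which contains exactly p hamiltonian cycles, where p is a prime number. Then G is 3-connected. -/
open SimpleGraph

/-- The set of edge sets of hamiltonian cycles of `G` (hamiltonian cycles are counted
as subgraphs, i.e. by their edge sets). -/
def hamCycleSets {V : Type*} (G : SimpleGraph V) : Set (Set (Sym2 V)) :=
  letI := Classical.decEq V
  {s | ∃ (v : V) (w : G.Walk v v), w.IsHamiltonianCycle ∧ {e | e ∈ w.edges} = s}

/-- The number of hamiltonian cycles of `G`, counted as subgraphs. -/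
noncomputable def hamCount {V : Type*} (G : SimpleGraph V) : ℕ := (hamCycleSets G).ncard

/-- The set of edge sets of cycles of length `k` in `G`. -/
def cycleSets {V : Type*} (G : SimpleGraph V) (k : ℕ) : Set (Set (Sym2 V)) :=
  {s | ∃ (v : V) (w : G.Walk v v), w.IsCycle ∧ w.length = k ∧ {e | e ∈ w.edges} = s}

/-- The number of cycles of length `k` in `G`, counted as subgraphs. -/
noncomputable def cycleCount {V : Type*} (G : SimpleGraph V) (k : ℕ) : ℕ := (cycleSets G k).ncard

/-- The set of edge sets of hamiltonian paths of `G`. -/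
def hamPathSets {V : Type*} (G : SimpleGraph V) : Set (Set (Sym2 V)) :=
  letI := Classical.decEq V
  {s | ∃ (u v : V) (w : G.Walk u v), w.IsHamiltonian ∧ {e | e ∈ w.edges} = s}

/-- The number of hamiltonian paths of `G`, counted as subgraphs. -/
noncomputable def hamPathCount {V : Type*} (G : SimpleGraph V) : ℕ := (hamPathSets G).ncard

/-- The degree of the vertex `v` in `G`. -/
noncomputable def vdeg {V : Type*} (G : SimpleGraph V) (v : V) : ℕ := (G.neighborSet v).ncard

/-- `G` contains a subdivision of `H`: there are branch vertices (an injective image of the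
vertices of `H`) joined by internally disjoint paths, one for each edge of `H`, whose internal
vertices avoid all branch vertices. -/
def ContainsSubdivision {V W : Type*} (G : SimpleGraph V) (H : SimpleGraph W) : Prop :=
  ∃ (f : W → V) (P : ∀ a b : W, H.Adj a b → G.Walk (f a) (f b)),
    Function.Injective f ∧
    (∀ a b (h : H.Adj a b), (P a b h).IsPath) ∧
    (∀ a b (h : H.Adj a b) (c : W), f c ∈ (P a b h).support → c = a ∨ c = b) ∧
    (∀ a b (h : H.Adj a b) (c d : W) (h' : H.Adj c d), s(a, b) ≠ s(c, d) →
      ∀ v, v ∈ (P a b h).support → v ∈ (P c d h').support →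
        (v = f a ∨ v = f b) ∧ (v = f c ∨ v = f d))

/-- A graph is planar iff (by Kuratowski's theorem) it contains no subdivision of `K₅`
nor of `K₃,₃`. -/
def PlanarGraph {V : Type*} (G : SimpleGraph V) : Prop :=
  ¬ ContainsSubdivision G (completeGraph (Fin 5)) ∧
  ¬ ContainsSubdivision G (completeBipartiteGraph (Fin 3) (Fin 3))

/-- A graph is `3`-connected if it has at least `4` vertices and remains connected after
the deletion of any set of at most `2` vertices. -/
def ThreeConnected {V : Type*} [Fintype V] (G : SimpleGraph V) : Prop :=
  4 ≤ Fintype.card V ∧ ∀ S : Set V, S.ncard ≤ 2 → (G.induce Sᶜ).Connected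

/-
Suppose `{a, b}` separated `G` into sides `A` and `B` (a smaller separating set can be enlarged,
since by the handshake lemma and the existence of a hamiltonian cycle `G` has an even number
`≥ 4` of vertices). A hamiltonian cycle meets the separator twice, so it splits at `a` and `b`
into a hamiltonian `a`–`b` path of `G[A ∪ {a, b}]` and one of `G[B ∪ {a, b}]`, and every such
pair glues back to a hamiltonian cycle: the number of hamiltonian cycles is the product of the two
path counts. Each count is even by Thomason's lollipop argument. In the graph whose vertices are
the hamiltonian paths of `G[U]` starting at `a` and whose edges are Pósa rotations, a path ending
at `z` has degree `deg_U z - 1`, so by the handshake lemma the paths ending at vertices of even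
degree are even in number. Inside a side all vertices other than `a`, `b` have odd degree, and
toggling the edge `ab`, which no hamiltonian `a`–`b` path of a side uses, makes the degree of `b`
even. Hence `4` divides the prime number of hamiltonian cycles, which is absurd.
-/

namespace List

variable {α : Type*}

lemma Nodup.reverse_ne_self {l : List α} (h : l.Nodup) (hl : 2 ≤ l.length) : l.reverse ≠ l := by
  intro hrev
  cases Palindrome.of_reverse_eq hrev with
  | nil => simp at hl
  | singleton => simp at hl
  | cons_concat x _ => simp at h

variable [DecidableEq α]

def reverseAfter (l : List α) (y : α) : List α :=
  l.take (l.idxOf y + 1) ++ (l.drop (l.idxOf y + 1)).reverse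

lemma reverseAfter_append_cons {s t : List α} {y : α} (hy : y ∉ s) :
    (s ++ y :: t).reverseAfter y = s ++ y :: t.reverse := by
  simp [reverseAfter, idxOf_append_of_notMem hy, take_append]

lemma exists_reverseAfter_eq (l : List α) (y : α) :
    ∃ s t, l = s ++ t ∧ l.reverseAfter y = s ++ t.reverse :=
  ⟨_, _, (take_append_drop _ _).symm, rfl⟩

lemma Nodup.reverseAfter_eq {m : List α} {x y z : α} (h : (m ++ [x, z]).Nodup) (hy : y ∈ m) :
    ∃ s t, m = s ++ y :: t ∧ (m ++ [x, z]).reverseAfter y = s ++ y :: z :: x :: t.reverse := by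
  obtain ⟨s, t, rfl⟩ := append_of_mem hy
  refine ⟨s, t, rfl, ?_⟩
  rw [append_assoc, cons_append, reverseAfter_append_cons]
  · simp
  · exact fun hs => disjoint_of_nodup_append h.of_append_left hs mem_cons_self

lemma Nodup.reverseAfter_ne_self {m : List α} {x y z : α} (h : (m ++ [x, z]).Nodup)
    (hy : y ∈ m) : (m ++ [x, z]).reverseAfter y ≠ m ++ [x, z] := by
  obtain ⟨s, t, rfl, hrev⟩ := h.reverseAfter_eq hy
  rw [hrev]
  intro heq
  have h' : (s ++ y :: (t ++ [x, z])).Nodup := by simpa using h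
  have ht := h'.of_append_right.of_cons
  exact ht.reverse_ne_self (by simp) (by simpa using heq)

lemma Nodup.injOn_reverseAfter {m : List α} {x z : α} (h : (m ++ [x, z]).Nodup) :
    Set.InjOn (m ++ [x, z]).reverseAfter {y | y ∈ m} := by
  have hz : z ∉ m := fun hz => disjoint_of_nodup_append h hz (by simp)
  have hxz : x ≠ z := by
    rintro rfl
    simp [nodup_append] at h
  intro y₁ hy₁ y₂ hy₂ heq
  obtain ⟨s₁, t₁, rfl, h₁⟩ := h.reverseAfter_eq hy₁
  obtain ⟨s₂, t₂, -, h₂⟩ := h.reverseAfter_eq hy₂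
  have heq' : (s₁ ++ [y₁]) ++ z :: (x :: t₁.reverse) = (s₂ ++ [y₂]) ++ z :: (x :: t₂.reverse) := by
    rw [h₁, h₂] at heq
    simpa using heq
  rw [append_cons_inj_of_notMem (by simp_all [eq_comm]) (by simp_all [eq_comm])] at heq'
  exact singleton_inj.mp (append_inj' heq'.1 rfl).2

end List

namespace SimpleGraph

variable {V : Type*} {G : SimpleGraph V}

namespace Walk

lemma IsPath.sym2_notMem_edges {u v c : V} {p : G.Walk u v} (hp : p.IsPath)
    (hc : c ∈ p.support) (hcu : c ≠ u) (hcv : c ≠ v) : s(u, v) ∉ p.edges := by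
  intro h
  rw [hp.eq_adj_toWalk_of_mem_edges h] at hc
  simp_all

lemma IsPath.one_lt_length {u v c : V} {p : G.Walk u v} (hp : p.IsPath)
    (hc : c ∈ p.support) (hcu : c ≠ u) (hcv : c ≠ v) : 1 < p.length := by
  refine lt_of_not_ge fun hlen => hp.sym2_notMem_edges hc hcu hcv ?_
  cases p with
  | nil => simp_all
  | cons h q => cases q with
    | nil => simp
    | cons => simp at hlen

lemma IsPath.ne_start_of_mem_support_tail {u v x : V} {p : G.Walk u v} (hp : p.IsPath)
    (hx : x ∈ p.support.tail) : x ≠ u := by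
  rintro rfl
  exact (List.nodup_cons.mp (p.cons_tail_support ▸ hp.support_nodup)).1 hx

lemma IsPath.eq_of_edgeSet_eq {u v : V} {p q : G.Walk u v} (hp : p.IsPath) (hq : q.IsPath)
    (h : p.edgeSet = q.edgeSet) : p = q := by
  induction p with
  | nil => exact ((hq.nil_iff_eq.mpr rfl).eq_nil).symm
  | @cons u c v huc p ih =>
    cases q with
    | nil => exact absurd (hp.nil_iff_eq.mpr rfl) not_nil_cons
    | @cons _ d _ hud q =>
      rw [cons_isPath_iff] at hp hq
      have hc : c = d := by
        have : s(u, c) ∈ (cons hud q).edgeSet := h ▸ (by simp)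
        simp only [mem_edgeSet, edges_cons, List.mem_cons] at this
        rcases this with h' | h'
        · exact Sym2.congr_right.mp h'
        · exact absurd (q.fst_mem_support_of_mem_edges h') hq.2
      subst hc
      have hp' : s(u, c) ∉ p.edgeSet := fun h' => hp.2 (p.fst_mem_support_of_mem_edges h')
      have hq' : s(u, c) ∉ q.edgeSet := fun h' => hq.2 (q.fst_mem_support_of_mem_edges h')
      rw [edgeSet_cons, edgeSet_cons] at h
      exact congrArg (cons huc) (ih hp.1 hq.1 (by rw [← Set.insert_sdiff_self_of_notMem hp', h,
        Set.insert_sdiff_self_of_notMem hq']))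

lemma IsPath.forall_mem_or_forall_mem {A B : Set V} {x y : V} {w : G.Walk x y} (hw : w.IsPath)
    (hcross : ∀ u ∈ A, ∀ v ∈ B, ¬G.Adj u v) (hAB : ∀ v ∈ w.support, v ≠ y → v ∈ A ∨ v ∈ B) :
    (∀ v ∈ w.support, v ≠ y → v ∈ A) ∨ (∀ v ∈ w.support, v ≠ y → v ∈ B) := by
  induction w with
  | nil => simp
  | @cons x m y hxm w ih =>
    rw [cons_isPath_iff] at hw
    have hxy : x ≠ y := fun hxy => hw.2 (hxy ▸ w.end_mem_support)
    simp only [support_cons, List.mem_cons, forall_eq_or_imp] at hAB ⊢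
    by_cases hmy : m = y
    · subst hmy
      have hw' : ∀ v ∈ w.support, v = m := by
        rw [(hw.1.nil_iff_eq.mpr rfl).eq_nil]
        simp
      rcases hAB.1 hxy with hx | hx
      · exact Or.inl ⟨fun _ => hx, fun v hv hvy => absurd (hw' v hv) hvy⟩
      · exact Or.inr ⟨fun _ => hx, fun v hv hvy => absurd (hw' v hv) hvy⟩
    rcases ih hw.1 hAB.2 with hA | hB
    · refine Or.inl ⟨fun _ => ?_, hA⟩
      rcases hAB.1 hxy with hx | hx
      · exact hx
      · exact absurd hxm.symm (hcross m (hA m w.start_mem_support hmy) x hx)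
    · refine Or.inr ⟨fun _ => ?_, hB⟩
      rcases hAB.1 hxy with hx | hx
      · exact absurd hxm (hcross x hx m (hB m w.start_mem_support hmy))
      · exact hx

lemma IsCycle.isHamiltonianCycle_of_forall_mem_support [DecidableEq V] {u : V}
    {c : G.Walk u u} (hc : c.IsCycle) (hmem : ∀ v, v ∈ c.support) : c.IsHamiltonianCycle := by
  refine isHamiltonianCycle_isCycle_and_isHamiltonian_tail.mpr
    ⟨hc, hc.isPath_tail.isHamiltonian_of_mem fun v => ?_⟩
  rw [c.support_tail_of_not_nil hc.not_nil]
  rcases List.mem_cons.mp (c.cons_tail_support ▸ hmem v) with rfl | hv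
  exacts [c.end_mem_tail_support hc.not_nil, hv]

end Walk

lemma hamCycleSets_eq [DecidableEq V] :
    hamCycleSets G = {s | ∃ (v : V) (c : G.Walk v v), c.IsHamiltonianCycle ∧ c.edgeSet = s} := by
  unfold hamCycleSets Walk.edgeSet
  convert rfl

variable {a b : V} {U : Set V}

variable (G) in
def spanningPaths (a b : V) (U : Set V) : Set (G.Walk a b) :=
  {p | p.IsPath ∧ ∀ v, v ∈ p.support ↔ v ∈ U}

variable (G) in
/-- The hamiltonian paths of `G[U]` starting at `a`, encoded by their vertex lists. -/
def spanningPathLists (a : V) (U : Set V) : Set (List V) :=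
  {l | l.IsChain G.Adj ∧ l.Nodup ∧ l.head? = some a ∧ ∀ v, v ∈ l ↔ v ∈ U}

lemma image_support_spanningPaths :
    Walk.support '' G.spanningPaths a b U =
      {l ∈ G.spanningPathLists a U | l.getLast? = some b} := by
  ext l
  constructor
  · rintro ⟨p, ⟨hp, hU⟩, rfl⟩
    refine ⟨⟨p.isChain_adj_support, hp.support_nodup, ?_, hU⟩, ?_⟩
    · rw [List.head?_eq_some_head p.support_ne_nil, Walk.head_support]
    · rw [List.getLast?_eq_some_getLast p.support_ne_nil, Walk.getLast_support]
  · rintro ⟨⟨hchain, hnodup, hhead, hU⟩, hlast⟩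
    have hne : l ≠ [] := by
      rintro rfl
      simp at hhead
    let p : G.Walk a b := (Walk.ofSupport l hne hchain).copy
      ((List.head_eq_iff_head?_eq_some hne).mpr hhead) (List.getLast_of_mem_getLast? hlast)
    have hp : p.support = l := by simp only [p, Walk.support_copy, Walk.support_ofSupport]
    exact ⟨p, ⟨by rw [Walk.isPath_def, hp]; exact hnodup, by rw [hp]; exact hU⟩, hp⟩

lemma ncard_spanningPaths : (G.spanningPaths a b U).ncard =
    {l ∈ G.spanningPathLists a U | l.getLast? = some b}.ncard := by
  rw [← image_support_spanningPaths, Set.ncard_image_of_injective _ Walk.support_injective]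

lemma finite_spanningPathLists [Finite V] : (G.spanningPathLists a U).Finite := by
  have := Fintype.ofFinite V
  exact (List.finite_length_le V (Fintype.card V)).subset fun l hl => hl.2.1.length_le_card

lemma exists_eq_append_pair {l : List V} (hl : l ∈ G.spanningPathLists a U) (hb : b ∈ U)
    (hab : a ≠ b) : ∃ m x z, l = m ++ [x, z] ∧ z ≠ a := by
  obtain ⟨-, hnodup, hhead, hmem⟩ := hl
  rcases l.eq_nil_or_concat' with rfl | ⟨r, z, rfl⟩
  · simp at hhead
  rcases r.eq_nil_or_concat' with rfl | ⟨m, x, rfl⟩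
  · have hbz : b = z := by simpa using (hmem b).mpr hb
    simp only [List.nil_append, List.head?_cons, Option.some.injEq] at hhead
    exact absurd (hhead.symm.trans hbz.symm) hab
  refine ⟨m, x, z, by simp, ?_⟩
  rintro rfl
  rcases m with _ | ⟨c, m⟩ <;> simp_all

lemma reverseAfter_mem_spanningPathLists [DecidableEq V] {m : List V} {x y z : V}
    (hl : m ++ [x, z] ∈ G.spanningPathLists a U) (hy : y ∈ m) (hzy : G.Adj z y) :
    (m ++ [x, z]).reverseAfter y ∈ G.spanningPathLists a U := by
  obtain ⟨hchain, hnodup, hhead, hmem⟩ := hl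
  obtain ⟨s, t, rfl, hrev⟩ := hnodup.reverseAfter_eq hy
  have hperm : (s ++ y :: z :: x :: t.reverse).Perm (s ++ y :: t ++ [x, z]) := by
    simpa using ((List.reverse_perm (t ++ [x, z])).cons y).append_left s
  rw [hrev]
  refine ⟨?_, hperm.nodup_iff.mpr hnodup, by simpa [List.head?_append] using hhead,
    fun v => hperm.mem_iff.trans (hmem v)⟩
  rw [List.isChain_append_cons_cons]
  refine ⟨hchain.infix ⟨[], t ++ [x, z], by simp⟩, hzy.symm, ?_⟩
  have : (t ++ [x, z]).reverse.IsChain G.Adj :=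
    List.isChain_reverse.mpr ((hchain.infix ⟨s ++ [y], [], by simp⟩).imp fun _ _ h => h.symm)
  simpa using this

lemma exists_pivot_of_reverse_append [DecidableEq V] {m s t : List V} {x z : V}
    (hl : m ++ [x, z] ∈ G.spanningPathLists a U) (hQ : s ++ t.reverse ∈ G.spanningPathLists a U)
    (hst : s ++ t = m ++ [x, z]) (hne : t.reverse ≠ t) :
    ∃ y ∈ m, G.Adj z y ∧ (m ++ [x, z]).reverseAfter y = s ++ t.reverse := by
  obtain ⟨t, x', z', rfl⟩ : ∃ t' x' z', t = t' ++ [x', z'] := by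
    rcases t.eq_nil_or_concat' with rfl | ⟨r, z', rfl⟩
    · exact absurd rfl hne
    rcases r.eq_nil_or_concat' with rfl | ⟨t', x', rfl⟩
    · exact absurd rfl hne
    exact ⟨t', x', z', by simp⟩
  have hst' : (s ++ t) ++ [x', z'] = m ++ [x, z] := by simpa using hst
  obtain ⟨rfl, hxz⟩ := List.append_inj' hst' rfl
  obtain ⟨rfl, rfl⟩ : x' = x ∧ z' = z := by simpa using hxz
  obtain ⟨-, hnodup, hhead, -⟩ := hl
  obtain ⟨hchainQ, -, hheadQ, -⟩ := hQ
  rcases s.eq_nil_or_concat' with rfl | ⟨s, y, rfl⟩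
  · -- the reversed path would start at `z`, which is not `a`
    cases t <;> simp_all
  have hys : y ∉ s := fun h => List.disjoint_of_nodup_append
    hnodup.of_append_left.of_append_left h (List.mem_singleton_self y)
  refine ⟨y, by simp, ?_, ?_⟩
  · have : s ++ [y] ++ (t ++ [x', z']).reverse = s ++ y :: z' :: x' :: t.reverse := by simp
    rw [this, List.isChain_append_cons_cons] at hchainQ
    exact hchainQ.2.1.symm
  · have : s ++ [y] ++ t ++ [x', z'] = s ++ y :: (t ++ [x', z']) := by simp
    rw [this, List.reverseAfter_append_cons hys]
    simp

variable (G) in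
/-- Thomason's lollipop graph: two paths are adjacent when one arises from the other by reversing
a final segment (a Pósa rotation). -/
def rotationGraph (a : V) (U : Set V) : SimpleGraph (G.spanningPathLists a U) :=
  fromRel fun P Q => ∃ s t, P.1 = s ++ t ∧ Q.1 = s ++ t.reverse

lemma image_val_neighborSet_rotationGraph [DecidableEq V] {m : List V} {x z : V}
    (hl : m ++ [x, z] ∈ G.spanningPathLists a U) :
    Subtype.val '' (G.rotationGraph a U).neighborSet ⟨_, hl⟩ =
      (m ++ [x, z]).reverseAfter '' {y | y ∈ m ∧ G.Adj z y} := by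
  ext Q
  constructor
  · rintro ⟨⟨Q, hQ⟩, ⟨hne, ⟨s, t, hst, rfl⟩ | ⟨s, t, rfl, hst⟩⟩, rfl⟩
    · obtain ⟨y, hy, hzy, h⟩ := exists_pivot_of_reverse_append hl hQ hst.symm
        (fun h => hne (Subtype.ext (hst.trans (congrArg (s ++ ·) h.symm))))
      exact ⟨y, ⟨hy, hzy⟩, h⟩
    · rw [← List.reverse_reverse t] at hQ
      obtain ⟨y, hy, hzy, h⟩ := exists_pivot_of_reverse_append hl hQ hst.symm
        (fun h => hne (Subtype.ext (hst.trans (congrArg (s ++ ·) (by simpa using h.symm)))))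
      exact ⟨y, ⟨hy, hzy⟩, by simpa using h⟩
  · rintro ⟨y, ⟨hy, hzy⟩, rfl⟩
    exact ⟨⟨_, reverseAfter_mem_spanningPathLists hl hy hzy⟩,
      ⟨fun h => hl.2.1.reverseAfter_ne_self hy (congrArg Subtype.val h).symm,
        Or.inl (List.exists_reverseAfter_eq _ _)⟩, rfl⟩

lemma neighborSet_inter_eq_insert {m : List V} {x z : V}
    (hl : m ++ [x, z] ∈ G.spanningPathLists a U) :
    G.neighborSet z ∩ U = insert x {y | y ∈ m ∧ G.Adj z y} := by
  have hxz : G.Adj x z := (List.isChain_append_cons_cons.mp hl.1).2.1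
  ext v
  simp only [Set.mem_inter_iff, mem_neighborSet, ← hl.2.2.2, Set.mem_insert_iff,
    Set.mem_ofPred_eq, List.mem_append, List.mem_cons, List.not_mem_nil, or_false]
  constructor
  · rintro ⟨hzv, hv | rfl | rfl⟩
    · exact Or.inr ⟨hv, hzv⟩
    · exact Or.inl rfl
    · exact absurd hzv (G.loopless.irrefl _)
  · rintro (rfl | ⟨hv, hzv⟩)
    · exact ⟨hxz.symm, Or.inr (Or.inl rfl)⟩
    · exact ⟨hzv, Or.inl hv⟩

/-- The rotations of a path ending at `z` correspond to the neighbours of `z` other than its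
predecessor `x`. -/
lemma ncard_neighborSet_rotationGraph_add_one (P : G.spanningPathLists a U) {m : List V}
    {x z : V} (hP : P.1 = m ++ [x, z]) :
    ((G.rotationGraph a U).neighborSet P).ncard + 1 = (G.neighborSet z ∩ U).ncard := by
  classical
  obtain ⟨l, hl⟩ := P
  obtain rfl : l = m ++ [x, z] := hP
  have hx : x ∉ {y | y ∈ m ∧ G.Adj z y} := fun hx =>
    List.disjoint_of_nodup_append hl.2.1 hx.1 List.mem_cons_self
  rw [neighborSet_inter_eq_insert hl,
    Set.ncard_insert_of_notMem hx (m.finite_toSet.subset fun y hy => hy.1),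
    ← (hl.2.1.injOn_reverseAfter.mono fun y hy => hy.1).ncard_image,
    ← image_val_neighborSet_rotationGraph hl, Set.ncard_image_of_injective _ Subtype.val_injective]

theorem even_ncard_spanningPathLists_getLast [Finite V] (hab : a ≠ b) (hb : b ∈ U)
    (hodd : ∀ v ∈ U, v ≠ a → v ≠ b → Odd (G.neighborSet v ∩ U).ncard)
    (heven : Even (G.neighborSet b ∩ U).ncard) :
    Even {l ∈ G.spanningPathLists a U | l.getLast? = some b}.ncard := by
  classical
  have := (finite_spanningPathLists (G := G) (a := a) (U := U)).fintype
  have hdeg : ∀ P, Odd ((G.rotationGraph a U).degree P) ↔ P.1.getLast? = some b := by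
    intro P
    obtain ⟨m, x, z, hP, hza⟩ := exists_eq_append_pair P.2 hb hab
    have hz : z ∈ U := (P.2.2.2.2 z).mp (by simp [hP])
    have h := ncard_neighborSet_rotationGraph_add_one P hP
    rw [Set.ncard_eq_toFinset_card', ← neighborFinset_def, card_neighborFinset_eq_degree] at h
    rw [hP, List.getLast?_append_of_ne_nil _ (by simp)]
    simp only [List.getLast?_cons_cons, List.getLast?_singleton, Option.some.injEq]
    rw [← Nat.not_even_iff_odd, ← Nat.even_add_one, h]
    constructor
    · intro hz_even
      by_contra hzb
      exact Nat.not_even_iff_odd.mpr (hodd z hz hza hzb) hz_even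
    · rintro rfl
      exact heven
  have hset : {l ∈ G.spanningPathLists a U | l.getLast? = some b} =
      Subtype.val '' {P : G.spanningPathLists a U | P.1.getLast? = some b} := by
    ext l
    simp [and_comm]
  rw [hset, Set.ncard_image_of_injective _ Subtype.val_injective, Set.ncard_eq_toFinset_card',
    Set.toFinset_ofPred]
  simpa only [hdeg] using (G.rotationGraph a U).even_card_odd_degree_vertices

lemma image_support_spanningPaths_subset {H : SimpleGraph V} {c : V} (hc : c ∈ U) (hca : c ≠ a)
    (hcb : c ≠ b) (hGH : ∀ x y, s(x, y) ≠ s(a, b) → G.Adj x y → H.Adj x y) :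
    Walk.support '' G.spanningPaths a b U ⊆ Walk.support '' H.spanningPaths a b U := by
  rintro _ ⟨p, ⟨hp, hU⟩, rfl⟩
  have hedges : ∀ e ∈ p.edges, e ∈ H.edgeSet := by
    intro e he
    induction e using Sym2.ind with
    | _ x y =>
      refine hGH x y (fun hxy => ?_) (p.adj_of_mem_edges he)
      exact hp.sym2_notMem_edges ((hU c).mpr hc) hca hcb (hxy ▸ he)
  refine ⟨p.transfer H hedges, ⟨hp.transfer hedges, ?_⟩, p.support_transfer hedges⟩
  simpa only [Walk.support_transfer] using hU

lemma ncard_spanningPaths_congr {H : SimpleGraph V} {c : V} (hc : c ∈ U) (hca : c ≠ a)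
    (hcb : c ≠ b) (hGH : ∀ x y, s(x, y) ≠ s(a, b) → (G.Adj x y ↔ H.Adj x y)) :
    (G.spanningPaths a b U).ncard = (H.spanningPaths a b U).ncard := by
  rw [← Set.ncard_image_of_injective _ Walk.support_injective,
    ← Set.ncard_image_of_injective _ Walk.support_injective,
    (image_support_spanningPaths_subset hc hca hcb fun x y h => (hGH x y h).mp).antisymm
      (image_support_spanningPaths_subset hc hca hcb fun x y h => (hGH x y h).mpr)]

open scoped symmDiff

lemma symmDiff_edge_adj_iff {x y : V} (h : s(x, y) ≠ s(a, b)) :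
    (G ∆ edge a b).Adj x y ↔ G.Adj x y := by
  rw [Ne, Sym2.eq_iff] at h
  simp only [symmDiff_def, sup_adj, sdiff_adj, edge_adj]
  tauto

lemma even_ncard_neighborSet_symmDiff_edge_iff [Finite V] (hab : a ≠ b) (ha : a ∈ U) :
    Even ((G ∆ edge a b).neighborSet b ∩ U).ncard ↔ ¬Even (G.neighborSet b ∩ U).ncard := by
  have hadj : ∀ v, (G ∆ edge a b).Adj b v ↔ (G.Adj b v ↔ v ≠ a) := by
    intro v
    simp only [symmDiff_def, sup_adj, sdiff_adj, edge_adj]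
    have := G.adj_symm (u := v) (v := b)
    grind
  by_cases hba : G.Adj b a
  · have hmem : a ∈ G.neighborSet b ∩ U := ⟨hba, ha⟩
    have h : (G ∆ edge a b).neighborSet b ∩ U = (G.neighborSet b ∩ U) \ {a} := by
      ext v
      by_cases hva : v = a <;> simp [hadj, hva, hba]
    rw [h, Set.ncard_sdiff_singleton_of_mem hmem,
      Nat.even_sub ((Set.ncard_pos).mpr ⟨a, hmem⟩)]
    simp
  · have h : (G ∆ edge a b).neighborSet b ∩ U = insert a (G.neighborSet b ∩ U) := by
      ext v
      by_cases hva : v = a <;> simp [hadj, hva, ha, hba]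
    rw [h, Set.ncard_insert_of_notMem (fun h => hba h.1), Nat.even_add_one]

/-- Toggling the edge `ab` fixes the parity of the degree of `b` without changing the paths, since
these have the interior vertex `c` and so avoid `ab`. -/
theorem even_ncard_spanningPaths [Finite V] {c : V} (hab : a ≠ b) (ha : a ∈ U) (hb : b ∈ U)
    (hc : c ∈ U) (hca : c ≠ a) (hcb : c ≠ b)
    (hodd : ∀ v ∈ U, v ≠ a → v ≠ b → Odd (G.neighborSet v ∩ U).ncard) :
    Even (G.spanningPaths a b U).ncard := by
  obtain ⟨H, hGH, heven⟩ : ∃ H : SimpleGraph V,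
      (∀ x y, s(x, y) ≠ s(a, b) → (G.Adj x y ↔ H.Adj x y)) ∧ Even (H.neighborSet b ∩ U).ncard := by
    by_cases heven : Even (G.neighborSet b ∩ U).ncard
    · exact ⟨G, fun _ _ _ => Iff.rfl, heven⟩
    · exact ⟨G ∆ edge a b, fun _ _ h => (symmDiff_edge_adj_iff h).symm,
        (even_ncard_neighborSet_symmDiff_edge_iff hab ha).mpr heven⟩
  rw [ncard_spanningPaths_congr hc hca hcb hGH, ncard_spanningPaths]
  refine even_ncard_spanningPathLists_getLast hab hb (fun v hv hva hvb => ?_) heven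
  have hN : H.neighborSet v = G.neighborSet v := by
    ext w
    refine (hGH v w fun h => ?_).symm
    rcases Sym2.mem_iff.mp (h ▸ Sym2.mem_mk_left v w) with rfl | rfl
    exacts [hva rfl, hvb rfl]
  rw [hN]
  exact hodd v hv hva hvb

structure IsSeparation (G : SimpleGraph V) (S A B : Set V) : Prop where
  left_nonempty : A.Nonempty
  right_nonempty : B.Nonempty
  disjoint : Disjoint A B
  union_eq : A ∪ B = Sᶜ
  not_adj : ∀ u ∈ A, ∀ v ∈ B, ¬G.Adj u v

variable {S A B : Set V}

namespace IsSeparation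

lemma symm (h : G.IsSeparation S A B) : G.IsSeparation S B A :=
  ⟨h.right_nonempty, h.left_nonempty, h.disjoint.symm, Set.union_comm A B ▸ h.union_eq,
    fun u hu v hv huv => h.not_adj v hv u hu huv.symm⟩

lemma mem_or_mem (h : G.IsSeparation {a, b} A B) {v : V} (hva : v ≠ a) (hvb : v ≠ b) :
    v ∈ A ∨ v ∈ B := by
  change v ∈ A ∪ B
  simp [h.union_eq, hva, hvb]

lemma ne_of_mem_left (h : G.IsSeparation {a, b} A B) {v : V} (hv : v ∈ A) : v ≠ a ∧ v ≠ b := by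
  have hv : v ∈ A ∪ B := Or.inl hv
  simpa [h.union_eq] using hv

lemma forall_mem_or_forall_mem (h : G.IsSeparation {a, b} A B) {p : G.Walk a b}
    (hp : p.IsPath) :
    (∀ v ∈ p.support, v ≠ a → v ≠ b → v ∈ A) ∨ (∀ v ∈ p.support, v ≠ a → v ≠ b → v ∈ B) := by
  cases p with
  | nil => simp
  | cons ham r =>
    rw [Walk.cons_isPath_iff] at hp
    have hr : ∀ v ∈ (Walk.cons ham r).support, v ≠ a → v ∈ r.support := by
      simp +contextual
    refine (hp.1.forall_mem_or_forall_mem h.not_adj fun v hv hvb => ?_).imp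
      (fun hA v hv hva hvb => hA v (hr v hv hva) hvb) (fun hB v hv hva hvb => hB v (hr v hv hva) hvb)
    exact h.mem_or_mem (fun hva => hp.2 (hva ▸ hv)) hvb

lemma mem_spanningPaths (h : G.IsSeparation {a, b} A B) {p q : G.Walk a b}
    (hp : p.IsPath) (hcover : ∀ v, v ∈ p.support ∨ v ∈ q.support)
    (hpA : ∀ v ∈ p.support, v ≠ a → v ≠ b → v ∈ A)
    (hqB : ∀ v ∈ q.support, v ≠ a → v ≠ b → v ∈ B) :
    p ∈ G.spanningPaths a b (insert a (insert b A)) := by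
  refine ⟨hp, fun v => ⟨fun hv => ?_, ?_⟩⟩
  · by_cases hva : v = a
    · exact Or.inl hva
    by_cases hvb : v = b
    · exact Or.inr (Or.inl hvb)
    exact Or.inr (Or.inr (hpA v hv hva hvb))
  · rintro (rfl | rfl | hvA)
    · exact p.start_mem_support
    · exact p.end_mem_support
    · obtain ⟨hva, hvb⟩ := h.ne_of_mem_left hvA
      refine (hcover v).resolve_right fun hq => ?_
      exact Set.disjoint_left.mp h.disjoint hvA (hqB v hq hva hvb)

lemma not_forall_mem_left (h : G.IsSeparation {a, b} A B) {p q : G.Walk a b}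
    (hcover : ∀ v, v ∈ p.support ∨ v ∈ q.support)
    (hpA : ∀ v ∈ p.support, v ≠ a → v ≠ b → v ∈ A)
    (hqA : ∀ v ∈ q.support, v ≠ a → v ≠ b → v ∈ A) : False := by
  obtain ⟨u, hu⟩ := h.right_nonempty
  obtain ⟨hua, hub⟩ := h.symm.ne_of_mem_left hu
  refine Set.disjoint_left.mp h.disjoint ?_ hu
  rcases hcover u with hp | hq
  exacts [hpA u hp hua hub, hqA u hq hua hub]

lemma exists_of_isHamiltonianCycle [DecidableEq V] (h : G.IsSeparation {a, b} A B)
    (hab : a ≠ b) {v : V} {c : G.Walk v v} (hc : c.IsHamiltonianCycle) :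
    ∃ p ∈ G.spanningPaths a b (insert a (insert b A)),
      ∃ q ∈ G.spanningPaths a b (insert a (insert b B)), c.edgeSet = p.edgeSet ∪ q.edgeSet := by
  set c' := c.rotate a (hc.mem_support a)
  have hc' : c'.IsHamiltonianCycle := hc.rotate _
  have hb := hc'.mem_support b
  set p := c'.takeUntil b hb
  set q := (c'.dropUntil b hb).reverse
  have hspec : p.append q.reverse = c' := by simp [p, q, Walk.take_spec]
  have hp : p.IsPath := hc'.isCycle.isPath_takeUntil hb
  have hq : q.IsPath := by
    have : (p.append (c'.dropUntil b hb)).IsCycle := (c'.take_spec hb).symm ▸ hc'.isCycle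
    exact (this.isPath_of_append_right (Walk.not_nil_of_ne hab)).reverse
  have hcover : ∀ v, v ∈ p.support ∨ v ∈ q.support := by
    intro v
    have := hc'.mem_support v
    rwa [← hspec, Walk.mem_support_append_iff, Walk.support_reverse, List.mem_reverse] at this
  have hedges : c.edgeSet = p.edgeSet ∪ q.edgeSet := by
    rw [← Walk.edgeSet_reverse q, ← Walk.edgeSet_append, hspec]
    ext e
    exact (Walk.rotate_edges c a _).perm.mem_iff.symm
  rcases h.forall_mem_or_forall_mem hp with hpA | hpB <;>
    rcases h.forall_mem_or_forall_mem hq with hqA | hqB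
  · exact (h.not_forall_mem_left hcover hpA hqA).elim
  · exact ⟨p, h.mem_spanningPaths hp hcover hpA hqB, q,
      h.symm.mem_spanningPaths hq (fun v => (hcover v).symm) hqB hpA, hedges⟩
  · exact ⟨q, h.mem_spanningPaths hq (fun v => (hcover v).symm) hqA hpB, p,
      h.symm.mem_spanningPaths hp hcover hpB hqA, hedges.trans (Set.union_comm _ _)⟩
  · exact (h.symm.not_forall_mem_left hcover hpB hqB).elim

lemma isHamiltonianCycle_append [DecidableEq V] (h : G.IsSeparation {a, b} A B)
    {p q : G.Walk a b} (hp : p ∈ G.spanningPaths a b (insert a (insert b A)))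
    (hq : q ∈ G.spanningPaths a b (insert a (insert b B))) :
    (p.append q.reverse).IsHamiltonianCycle := by
  obtain ⟨u, hu⟩ := h.left_nonempty
  obtain ⟨hua, hub⟩ := h.ne_of_mem_left hu
  have hdisj : p.support.tail.Disjoint q.reverse.support.tail := by
    intro x hxp hxq
    have hxa := hp.1.ne_start_of_mem_support_tail hxp
    have hxb := hq.1.reverse.ne_start_of_mem_support_tail hxq
    have hxA : x ∈ insert a (insert b A) := (hp.2 x).mp (List.mem_of_mem_tail hxp)
    have hxB : x ∈ insert a (insert b B) :=
      (hq.2 x).mp (by simpa using List.mem_of_mem_tail hxq)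
    simp only [Set.mem_insert_iff, hxa, hxb, false_or] at hxA hxB
    exact Set.disjoint_left.mp h.disjoint hxA hxB
  have hcyc := hp.1.isCycle_append hq.1.reverse hdisj
    (Or.inl (hp.1.one_lt_length ((hp.2 u).mpr (by simp [hu])) hua hub))
  refine hcyc.isHamiltonianCycle_of_forall_mem_support fun v => ?_
  rw [Walk.mem_support_append_iff, Walk.support_reverse, List.mem_reverse]
  by_cases hva : v = a
  · exact Or.inl (hva ▸ p.start_mem_support)
  by_cases hvb : v = b
  · exact Or.inl (hvb ▸ p.end_mem_support)
  rcases h.mem_or_mem hva hvb with hv | hv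
  · exact Or.inl ((hp.2 v).mpr (by simp [hv]))
  · exact Or.inr ((hq.2 v).mpr (by simp [hv]))

lemma exists_mem_right_of_mem_edges (h : G.IsSeparation {a, b} A B) {q : G.Walk a b}
    (hq : q ∈ G.spanningPaths a b (insert a (insert b B))) {e : Sym2 V} (he : e ∈ q.edges) :
    ∃ x ∈ e, x ∈ B := by
  obtain ⟨c, hc⟩ := h.right_nonempty
  obtain ⟨hca, hcb⟩ := h.symm.ne_of_mem_left hc
  by_contra! hnot
  refine hq.1.sym2_notMem_edges ((hq.2 c).mpr (by simp [hc])) hca hcb ?_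
  have hend : ∀ x ∈ e, x = a ∨ x = b := fun x hx => by
    have := (hq.2 x).mp (q.mem_support_of_mem_edges he hx)
    simpa [hnot x hx] using this
  induction e using Sym2.ind with
  | _ x y =>
    have hxy := (q.adj_of_mem_edges he).ne
    rcases hend x (Sym2.mem_mk_left x y) with rfl | rfl <;>
      rcases hend y (Sym2.mem_mk_right x y) with rfl | rfl
    exacts [absurd rfl hxy, he, Sym2.eq_swap ▸ he, absurd rfl hxy]

lemma injOn_edgeSet_union (h : G.IsSeparation {a, b} A B) :
    Set.InjOn (fun pq : G.Walk a b × G.Walk a b => pq.1.edgeSet ∪ pq.2.edgeSet)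
      (G.spanningPaths a b (insert a (insert b A)) ×ˢ
        G.spanningPaths a b (insert a (insert b B))) := by
  set inside : Set (Sym2 V) := {e | ∀ x ∈ e, x ∈ insert a (insert b A)}
  have hsub : ∀ p ∈ G.spanningPaths a b (insert a (insert b A)), p.edgeSet ⊆ inside :=
    fun p hp e he x hx => (hp.2 x).mp (p.mem_support_of_mem_edges he hx)
  have hout : ∀ q ∈ G.spanningPaths a b (insert a (insert b B)), ∀ e ∈ q.edgeSet,
      e ∉ inside := by
    intro q hq e he hin
    obtain ⟨x, hxe, hxB⟩ := h.exists_mem_right_of_mem_edges hq he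
    obtain ⟨hxa, hxb⟩ := h.symm.ne_of_mem_left hxB
    have hxA := hin x hxe
    simp only [Set.mem_insert_iff, hxa, hxb, false_or] at hxA
    exact Set.disjoint_left.mp h.disjoint hxA hxB
  have hsplit : ∀ p ∈ G.spanningPaths a b (insert a (insert b A)),
      ∀ q ∈ G.spanningPaths a b (insert a (insert b B)),
      p.edgeSet = (p.edgeSet ∪ q.edgeSet) ∩ inside ∧
        q.edgeSet = (p.edgeSet ∪ q.edgeSet) \ inside := fun p hp q hq =>
    ⟨Set.ext fun e => ⟨fun he => ⟨Or.inl he, hsub p hp he⟩,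
      fun ⟨he, hin⟩ => he.resolve_right fun he' => hout q hq e he' hin⟩,
    Set.ext fun e => ⟨fun he => ⟨Or.inr he, hout q hq e he⟩,
      fun ⟨he, hout'⟩ => he.resolve_left fun he' => hout' (hsub p hp he')⟩⟩
  rintro ⟨p, q⟩ ⟨hp, hq⟩ ⟨p', q'⟩ ⟨hp', hq'⟩ heq
  obtain ⟨hpE, hqE⟩ := hsplit p hp q hq
  obtain ⟨hpE', hqE'⟩ := hsplit p' hp' q' hq'
  simp only at heq
  rw [Prod.mk.injEq]
  exact ⟨hp.1.eq_of_edgeSet_eq hp'.1 (by rw [hpE, hpE', heq]),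
    hq.1.eq_of_edgeSet_eq hq'.1 (by rw [hqE, hqE', heq])⟩

theorem hamCount_eq (h : G.IsSeparation {a, b} A B) (hab : a ≠ b) :
    hamCount G = (G.spanningPaths a b (insert a (insert b A))).ncard *
      (G.spanningPaths a b (insert a (insert b B))).ncard := by
  classical
  have himage : hamCycleSets G =
      (fun pq : G.Walk a b × G.Walk a b => pq.1.edgeSet ∪ pq.2.edgeSet) ''
        (G.spanningPaths a b (insert a (insert b A)) ×ˢ
          G.spanningPaths a b (insert a (insert b B))) := by
    rw [hamCycleSets_eq]
    ext s
    constructor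
    · rintro ⟨v, c, hc, rfl⟩
      obtain ⟨p, hp, q, hq, hpq⟩ := h.exists_of_isHamiltonianCycle hab hc
      exact ⟨(p, q), ⟨hp, hq⟩, hpq.symm⟩
    · rintro ⟨⟨p, q⟩, ⟨hp, hq⟩, rfl⟩
      exact ⟨a, p.append q.reverse, h.isHamiltonianCycle_append hp hq,
        by rw [Walk.edgeSet_append, Walk.edgeSet_reverse]⟩
  rw [hamCount, himage, h.injOn_edgeSet_union.ncard_image, Set.ncard_prod]

theorem even_ncard_spanningPaths [Finite V] (h : G.IsSeparation {a, b} A B) (hab : a ≠ b)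
    (hodd : ∀ v ∈ A, Odd (G.neighborSet v).ncard) :
    Even (G.spanningPaths a b (insert a (insert b A))).ncard := by
  obtain ⟨c, hc⟩ := h.left_nonempty
  obtain ⟨hca, hcb⟩ := h.ne_of_mem_left hc
  refine SimpleGraph.even_ncard_spanningPaths hab (by simp) (by simp) (by simp [hc]) hca hcb ?_
  intro v hv hva hvb
  have hvA : v ∈ A := by simpa [hva, hvb] using hv
  rw [Set.inter_eq_left.mpr fun w hvw => ?_]
  · exact hodd v hvA
  by_cases hwa : w = a
  · exact Or.inl hwa
  by_cases hwb : w = b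
  · exact Or.inr (Or.inl hwb)
  exact Or.inr (Or.inr ((h.mem_or_mem hwa hwb).resolve_right (h.not_adj v hvA w · hvw)))

theorem four_dvd_hamCount [Finite V] (h : G.IsSeparation {a, b} A B) (hab : a ≠ b)
    (hodd : ∀ v, Odd (G.neighborSet v).ncard) : 4 ∣ hamCount G := by
  rw [h.hamCount_eq hab]
  exact Nat.mul_dvd_mul (even_iff_two_dvd.mp (h.even_ncard_spanningPaths hab fun v _ => hodd v))
    (even_iff_two_dvd.mp (h.symm.even_ncard_spanningPaths hab fun v _ => hodd v))

lemma insert_of_mem (h : G.IsSeparation S A B) {c : V} (hc : c ∈ A) (hA : A.Nontrivial) :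
    G.IsSeparation (insert c S) (A \ {c}) B := by
  refine ⟨hA.exists_ne c, h.right_nonempty, h.disjoint.mono_left Set.sdiff_subset, ?_,
    fun u hu v hv => h.not_adj u hu.1 v hv⟩
  rw [show (insert c S)ᶜ = Sᶜ \ {c} by ext; simp [and_comm], ← h.union_eq,
    Set.union_sdiff_distrib, Set.sdiff_singleton_eq_self (Set.disjoint_left.mp h.disjoint hc)]

lemma exists_pair [Finite V] (h : G.IsSeparation S A B) (hS : S.ncard ≤ 2)
    (hV : 4 ≤ Nat.card V) : ∃ a b, a ≠ b ∧ ∃ A B, G.IsSeparation {a, b} A B := by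
  induction hk : 2 - S.ncard generalizing S A B with
  | zero =>
    obtain ⟨a, b, hab, rfl⟩ := Set.ncard_eq_two.mp (show S.ncard = 2 by omega)
    exact ⟨a, b, hab, A, B, h⟩
  | succ k ih =>
    have hcard : A.ncard + B.ncard + S.ncard = Nat.card V := by
      rw [← Set.ncard_union_eq h.disjoint, h.union_eq, add_comm, Set.ncard_add_ncard_compl]
    have hpad : ∀ {A B : Set V}, G.IsSeparation S A B → 1 < A.ncard →
        ∃ a b, a ≠ b ∧ ∃ A B, G.IsSeparation {a, b} A B := by
      intro A B h hA
      obtain ⟨c, hc⟩ := h.left_nonempty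
      have hcS : c ∉ S := by
        have : c ∈ A ∪ B := Or.inl hc
        rwa [h.union_eq] at this
      refine ih (h.insert_of_mem hc (Set.one_lt_ncard_iff_nontrivial.mp hA)) ?_ ?_ <;>
        rw [Set.ncard_insert_of_notMem hcS] <;> omega
    rcases (by omega : 1 < A.ncard ∨ 1 < B.ncard) with hA | hB
    exacts [hpad h hA, hpad h.symm hB]

end IsSeparation

lemma exists_isSeparation_of_not_connected (hS : Sᶜ.Nonempty) (h : ¬(G.induce Sᶜ).Connected) :
    ∃ A B, G.IsSeparation S A B := by
  have : Nonempty ↥Sᶜ := hS.to_subtype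
  obtain ⟨x, y, hxy⟩ : ∃ x y : ↥Sᶜ, ¬(G.induce Sᶜ).Reachable x y := by
    by_contra! hr
    exact h ⟨hr⟩
  set A : Set V := {v | ∃ hv : v ∈ Sᶜ, (G.induce Sᶜ).Reachable x ⟨v, hv⟩}
  have hA : A ⊆ Sᶜ := fun v hv => hv.1
  refine ⟨A, Sᶜ \ A, ⟨⟨x, x.2, .rfl⟩, ⟨y, y.2, fun ⟨_, hy⟩ => hxy hy⟩, Set.disjoint_sdiff_right,
    Set.union_sdiff_cancel hA, ?_⟩⟩
  rintro u ⟨hu, hxu⟩ v ⟨hv, hvA⟩ huv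
  exact hvA ⟨hv, hxu.trans (Adj.reachable (G := G.induce Sᶜ) huv)⟩

lemma even_card_of_forall_odd_ncard_neighborSet [Fintype V]
    (hodd : ∀ v, Odd (G.neighborSet v).ncard) : Even (Fintype.card V) := by
  classical
  have hdeg : ∀ v, Odd (G.degree v) := fun v => by
    rw [← card_neighborSet_eq_degree, ← Nat.card_eq_fintype_card, Nat.card_coe_set_eq]
    exact hodd v
  simpa [hdeg] using G.even_card_odd_degree_vertices

lemma three_le_card_of_hamCount_ne_zero [Fintype V] (h : hamCount G ≠ 0) :
    3 ≤ Fintype.card V := by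
  classical
  obtain ⟨s, hs⟩ := Set.nonempty_of_ncard_ne_zero h
  rw [hamCycleSets_eq] at hs
  obtain ⟨v, c, hc, -⟩ := hs
  exact hc.length_eq ▸ hc.isCycle.three_le_length

end SimpleGraph

theorem stmt4 {V : Type*} [Fintype V] (G : SimpleGraph V) (p : ℕ) (hp : p.Prime)
    (hodd : ∀ v, Odd (vdeg G v)) (h : hamCount G = p) :
    ThreeConnected G := by
  have hcard : 4 ≤ Fintype.card V := by
    have h3 := G.three_le_card_of_hamCount_ne_zero (h ▸ hp.ne_zero)
    obtain ⟨k, hk⟩ := G.even_card_of_forall_odd_ncard_neighborSet hodd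
    omega
  refine ⟨hcard, fun S hS => ?_⟩
  by_contra hconn
  have hSc : Sᶜ.Nonempty := by
    have := Set.ncard_add_ncard_compl S
    rw [Nat.card_eq_fintype_card] at this
    exact Set.nonempty_of_ncard_ne_zero (by omega)
  obtain ⟨A, B, hsep⟩ := exists_isSeparation_of_not_connected hSc hconn
  obtain ⟨a, b, hab, A, B, hsep⟩ := hsep.exists_pair hS (by rwa [Nat.card_eq_fintype_card])
  have h4 := hsep.four_dvd_hamCount hab hodd
  rw [h] at h4
  obtain rfl : p = 2 := hp.even_iff.mp (even_iff_two_dvd.mpr (dvd_trans (by norm_num) h4))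
  norm_num at h4
end

section
/- Let G be a uniquely traceable graph of order n ≥ 2 whose unique hamiltonian path is v1 v2 … vn. Then v1 and vn both have degree 1 in G and every other vertex of G has degree at least 2; in particular, G has exactly two vertices of degree 1 and G is connected but not 2-connected. -/
open SimpleGraph

/-- A graph is `2`-connected if it has at least `3` vertices and remains connected after
the deletion of any single vertex. -/
def TwoConnected {V : Type*} [Fintype V] (G : SimpleGraph V) : Prop :=
  3 ≤ Fintype.card V ∧ ∀ x : V, (G.induce ({x}ᶜ : Set V)).Connected

/-! If the end vertex `v₁` of the unique hamiltonian path `v₁ … vₙ` were adjacent to some `vᵢ`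
with `i > 2`, then `vᵢ₋₁ … v₁ vᵢ … vₙ` would be a second hamiltonian path (a Pósa rotation).
So `v₁` and, symmetrically, `vₙ` are leaves, every interior vertex has its two path neighbours,
and deleting `v₂` isolates `v₁`. -/

namespace SimpleGraph.Walk

variable {V : Type*} [DecidableEq V] {G : SimpleGraph V} {u v : V}

lemma IsHamiltonian.of_support_perm {a b : V} {p : G.Walk u v} {q : G.Walk a b}
    (hp : p.IsHamiltonian) (hqp : q.support.Perm p.support) : q.IsHamiltonian := fun x => by
  rw [hqp.count_eq]
  exact hp x

lemma IsHamiltonian.reverse {p : G.Walk u v} (hp : p.IsHamiltonian) : p.reverse.IsHamiltonian :=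
  hp.of_support_perm (by rw [support_reverse]; exact List.reverse_perm _)

lemma IsHamiltonian.exists_isHamiltonian_mem_edges_of_adj {p : G.Walk u v}
    (hp : p.IsHamiltonian) {x : V} (hux : G.Adj u x) :
    ∃ (a : V) (q : G.Walk a v), q.IsHamiltonian ∧ s(u, x) ∈ q.edges := by
  have hx := hp.mem_support x
  set P := p.takeUntil x hx
  set Q := p.dropUntil x hx
  have hP : ¬ P.reverse.Nil := not_nil_of_ne hux.ne'
  refine ⟨_, P.reverse.tail.append (cons hux Q), hp.of_support_perm ?_, ?_⟩
  · rw [← p.take_spec hx, support_append, support_append, support_tail_of_not_nil _ hP,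
      support_cons, List.tail_cons, ← Q.cons_tail_support]
    refine List.perm_middle.trans ?_
    rw [← List.cons_append, P.reverse.cons_tail_support, support_reverse]
    exact (List.reverse_perm _).append_right _
  · simp [edges_append]

lemma IsPath.two_le_vdeg_of_mem_support [Finite V] {p : G.Walk u v} (hp : p.IsPath) {x : V}
    (hx : x ∈ p.support) (hxu : x ≠ u) (hxv : x ≠ v) : 2 ≤ vdeg G x := by
  set P := p.takeUntil x hx
  set Q := p.dropUntil x hx
  have hPQ : (P.append Q).IsPath := by rwa [p.take_spec hx]
  have hP : ¬ P.Nil := not_nil_of_ne hxu.symm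
  have hQ : ¬ Q.Nil := not_nil_of_ne hxv
  have hne : P.penultimate ≠ Q.snd := by
    intro h
    have hdisj := hPQ.disjoint_support_of_append hQ
    rw [support_tail_of_not_nil _ hQ] at hdisj
    have hP' : P.penultimate ∈ P.support := P.getVert_mem_support _
    have hQ' : P.penultimate ∈ Q.support.tail := h ▸ snd_mem_tail_support hQ
    exact hdisj hP' hQ'
  calc 2 = ({P.penultimate, Q.snd} : Set V).ncard := (Set.ncard_pair hne).symm
    _ ≤ vdeg G x := Set.ncard_le_ncard
      (Set.pair_subset (adj_penultimate hP).symm (adj_snd hQ)) (Set.toFinite _)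

lemma IsHamiltonian.connected {p : G.Walk u v} (hp : p.IsHamiltonian) : G.Connected :=
  (connected_iff_exists_forall_reachable G).mpr
    ⟨u, fun x => (p.takeUntil x (hp.mem_support x)).reachable⟩

end SimpleGraph.Walk

section

variable {V : Type*} {G : SimpleGraph V}

lemma edges_eq_of_hamPathCount_eq_one [DecidableEq V] (hG : hamPathCount G = 1)
    {a b c d : V} {p : G.Walk a b} {q : G.Walk c d} (hp : p.IsHamiltonian)
    (hq : q.IsHamiltonian) : {e | e ∈ p.edges} = {e | e ∈ q.edges} := by
  obtain ⟨s, hs⟩ := Set.ncard_eq_one.mp hG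
  have hps : {e | e ∈ p.edges} ∈ hamPathSets G := ⟨a, b, p, by convert hp, rfl⟩
  have hqs : {e | e ∈ q.edges} ∈ hamPathSets G := ⟨c, d, q, by convert hq, rfl⟩
  rw [hs] at hps hqs
  exact hps.trans hqs.symm

lemma neighborSet_eq_singleton_snd_of_hamPathCount_eq_one [DecidableEq V]
    (hG : hamPathCount G = 1) {u v : V} {p : G.Walk u v} (hp : p.IsHamiltonian) (hnil : ¬ p.Nil) :
    G.neighborSet u = {p.snd} := by
  ext x
  refine ⟨fun hux => ?_, fun hx => hx ▸ Walk.adj_snd hnil⟩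
  obtain ⟨_, q, hq, hmem⟩ := hp.exists_isHamiltonian_mem_edges_of_adj hux
  have hmem' : s(u, x) ∈ {e | e ∈ p.edges} := edges_eq_of_hamPathCount_eq_one hG hq hp ▸ hmem
  exact hp.isPath.eq_snd_of_mem_edges hmem'

lemma not_twoConnected_of_neighborSet_eq_singleton [Fintype V] {u b : V}
    (hu : G.neighborSet u = {b}) : ¬ TwoConnected G := by
  classical
  rintro ⟨hcard, hconn⟩
  obtain ⟨t, -, ht⟩ := Finset.exists_mem_notMem_of_card_lt_card (s := ({u, b} : Finset V))
    (t := Finset.univ) (Finset.card_le_two.trans_lt (by rw [Finset.card_univ]; omega))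
  have hub : u ≠ b := G.ne_of_adj (show b ∈ G.neighborSet u by rw [hu]; rfl)
  obtain ⟨y, hy⟩ := ((hconn b).preconnected ⟨u, hub⟩ ⟨t, by grind⟩).nonempty_neighborSet_left
    (by grind)
  have hy' : (y : V) ∈ G.neighborSet u := hy
  rw [hu] at hy'
  exact y.2 hy'

end

theorem stmt12 {V : Type*} [Fintype V] [DecidableEq V] (G : SimpleGraph V) (hn : 2 ≤ Fintype.card V)
    (hut : hamPathCount G = 1) {u v : V} (w : G.Walk u v) (hw : w.IsHamiltonian) :
    vdeg G u = 1 ∧ vdeg G v = 1 ∧ (∀ x : V, x ≠ u → x ≠ v → 2 ≤ vdeg G x) ∧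
    {x : V | vdeg G x = 1}.ncard = 2 ∧ G.Connected ∧ ¬ TwoConnected G := by
  have hnil : ¬ w.Nil := by
    rw [← Walk.length_eq_zero_iff, hw.length_eq]
    omega
  have huv : u ≠ v := mt hw.isPath.nil_iff_eq.mpr hnil
  have hu := neighborSet_eq_singleton_snd_of_hamPathCount_eq_one hut hw hnil
  have hv := neighborSet_eq_singleton_snd_of_hamPathCount_eq_one hut hw.reverse
    (by simpa using hnil)
  have hdu : vdeg G u = 1 := by rw [vdeg, hu, Set.ncard_singleton]
  have hdv : vdeg G v = 1 := by rw [vdeg, hv, Set.ncard_singleton]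
  have hmid (x : V) : x ≠ u → x ≠ v → 2 ≤ vdeg G x :=
    hw.isPath.two_le_vdeg_of_mem_support (hw.mem_support x)
  have hleaves : {x : V | vdeg G x = 1} = {u, v} := by
    ext x
    simp only [Set.mem_ofPred_eq, Set.mem_insert_iff, Set.mem_singleton_iff]
    refine ⟨fun hx => ?_, by rintro (rfl | rfl) <;> assumption⟩
    by_contra! h
    have := hmid x h.1 h.2
    omega
  exact ⟨hdu, hdv, hmid, by rw [hleaves, Set.ncard_pair huv], hw.connected,
    not_twoConnected_of_neighborSet_eq_singleton hu⟩
end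

section
/- For every n ≥ 2, every uniquely traceable graph of order n has at most ⌊(n − 1)²/4⌋ + 1 edges. -/
open SimpleGraph

/-!
Let `v₀ v₁ … vₘ` be the unique hamiltonian path, `m = n - 1`. Reversing a segment `vₐ … v_b`
of it gives another hamiltonian path whenever the new junctions are edges, so uniqueness rules out
the chords `v₀vⱼ` (`j ≥ 2`) and `vᵢvₘ` (`i ≤ m - 2`), and any two chords `vᵢvⱼ`, `vᵢ₊₁vⱼ₊₁`.
Hence the chords with `j - i = m - k` have `1 ≤ i < k` and no two consecutive `i`, so there are
at most `⌊k / 2⌋` of them. Summing over `k`, there are at most `⌊(m - 2)² / 4⌋` chords, and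
`m + ⌊(m - 2)² / 4⌋ ≤ ⌊m² / 4⌋ + 1`.
-/

open Finset

theorem two_mul_card_le_of_add_one_notMem {A : Finset ℕ} {k : ℕ} (hA : A ⊆ Ico 1 k)
    (hgap : ∀ i ∈ A, i + 1 ∉ A) : 2 * #A ≤ k := by
  have hdisj : Disjoint A (A.map (addRightEmbedding 1)) := by
    simp only [Finset.disjoint_left, mem_map, addRightEmbedding_apply, not_exists, not_and]
    rintro _ hi j hj rfl
    exact hgap j hj hi
  have hsub : A ∪ A.map (addRightEmbedding 1) ⊆ Ico 1 (k + 1) := by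
    intro i hi
    simp only [mem_union, mem_map, addRightEmbedding_apply] at hi
    rcases hi with hi | ⟨j, hj, rfl⟩
    · have := mem_Ico.1 (hA hi); simp only [mem_Ico]; omega
    · have := mem_Ico.1 (hA hj); simp only [mem_Ico]; omega
  calc 2 * #A = #(A ∪ A.map (addRightEmbedding 1)) := by
        rw [card_union_of_disjoint hdisj, card_map, two_mul]
    _ ≤ #(Ico 1 (k + 1)) := card_le_card hsub
    _ = k := by simp

theorem sum_range_succ_div_two (M : ℕ) : ∑ k ∈ range (M + 1), k / 2 = M ^ 2 / 4 := by
  induction M with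
  | zero => simp
  | succ M ih =>
    rw [sum_range_succ, ih]
    rcases Nat.even_or_odd' M with ⟨t, rfl | rfl⟩
    · rw [show (2 * t) ^ 2 = 4 * t ^ 2 by ring,
        show (2 * t + 1) ^ 2 = 4 * t ^ 2 + 4 * t + 1 by ring]
      omega
    · rw [show (2 * t + 1) ^ 2 = 4 * t ^ 2 + 4 * t + 1 by ring,
        show (2 * t + 1 + 1) ^ 2 = 4 * t ^ 2 + 8 * t + 4 by ring]
      omega

theorem card_diagonal_le {m k : ℕ} {T : Finset (ℕ × ℕ)}
    (hT : ∀ p ∈ T, 1 ≤ p.1 ∧ p.1 + 2 ≤ p.2 ∧ p.2 < m ∧ (p.1 + 1, p.2 + 1) ∉ T) :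
    #{p ∈ T | m - (p.2 - p.1) = k} ≤ k / 2 := by
  set D := {p ∈ T | m - (p.2 - p.1) = k}
  have hD : ∀ p ∈ D, p ∈ T ∧ p.2 = p.1 + (m - k) ∧ 1 ≤ p.1 ∧ p.1 < k := by
    intro p hp
    obtain ⟨hpT, hpk⟩ := mem_filter.1 hp
    have := hT p hpT
    exact ⟨hpT, by omega, by omega, by omega⟩
  have hinj : Set.InjOn Prod.fst (D : Set (ℕ × ℕ)) := fun p hp q hq hpq =>
    Prod.ext hpq (by have := hD p hp; have := hD q hq; omega)
  have hgap : ∀ i ∈ D.image Prod.fst, i + 1 ∉ D.image Prod.fst := by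
    simp only [mem_image]
    rintro _ ⟨p, hp, rfl⟩ ⟨q, hq, hqp⟩
    obtain ⟨hpT, hp2, -⟩ := hD p hp
    obtain ⟨hqT, hq2, -⟩ := hD q hq
    refine (hT p hpT).2.2.2 ?_
    rwa [show q = (p.1 + 1, p.2 + 1) from Prod.ext (by dsimp only; omega) (by dsimp only; omega)]
      at hqT
  have := two_mul_card_le_of_add_one_notMem (k := k) (fun i hi => by
    obtain ⟨p, hp, rfl⟩ := mem_image.1 hi
    have := hD p hp
    exact mem_Ico.2 ⟨this.2.2.1, this.2.2.2⟩) hgap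
  rw [card_image_of_injOn hinj] at this
  omega

theorem card_le_sub_two_sq_div_four {m : ℕ} {T : Finset (ℕ × ℕ)}
    (hT : ∀ p ∈ T, 1 ≤ p.1 ∧ p.1 + 2 ≤ p.2 ∧ p.2 < m ∧ (p.1 + 1, p.2 + 1) ∉ T) :
    #T ≤ (m - 2) ^ 2 / 4 := by
  have hmaps : Set.MapsTo (fun p : ℕ × ℕ => m - (p.2 - p.1)) T (range (m - 2 + 1)) := by
    intro p hp
    have := hT p hp
    simp only [coe_range, Set.mem_Iio]
    omega
  calc #T = ∑ k ∈ range (m - 2 + 1), #{p ∈ T | m - (p.2 - p.1) = k} :=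
        card_eq_sum_card_fiberwise hmaps
    _ ≤ ∑ k ∈ range (m - 2 + 1), k / 2 := sum_le_sum fun k _ => card_diagonal_le hT
    _ = (m - 2) ^ 2 / 4 := sum_range_succ_div_two _

theorem add_sub_two_sq_div_four_le (m : ℕ) : m + (m - 2) ^ 2 / 4 ≤ m ^ 2 / 4 + 1 := by
  rcases Nat.lt_or_ge m 2 with hm | hm
  · interval_cases m <;> simp
  · obtain ⟨t, rfl⟩ := Nat.exists_eq_add_of_le' hm
    rw [Nat.add_sub_cancel, show (t + 2) ^ 2 = t ^ 2 + 4 * (t + 1) by ring]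
    omega

def indexPairs (R : ℕ → ℕ → Prop) [DecidableRel R] (m : ℕ) : Finset (ℕ × ℕ) :=
  {p ∈ range (m + 1) ×ˢ range (m + 1) | p.1 < p.2 ∧ R p.1 p.2}

theorem mem_indexPairs {R : ℕ → ℕ → Prop} [DecidableRel R] {m : ℕ} {p : ℕ × ℕ} :
    p ∈ indexPairs R m ↔ p.1 < p.2 ∧ p.2 ≤ m ∧ R p.1 p.2 := by
  simp only [indexPairs, mem_filter, mem_product, mem_range]
  exact ⟨fun ⟨⟨_, h2⟩, h, hR⟩ => ⟨h, by omega, hR⟩,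
    fun ⟨h, h2, hR⟩ => ⟨⟨by omega, by omega⟩, h, hR⟩⟩

theorem card_indexPairs_le (R : ℕ → ℕ → Prop) [DecidableRel R] (m : ℕ)
    (hstart : ∀ j, 2 ≤ j → j ≤ m → ¬ R 0 j) (hend : ∀ i, i + 2 ≤ m → ¬ R i m)
    (hshift : ∀ i j, i + 2 ≤ j → j < m → R i j → ¬ R (i + 1) (j + 1)) :
    #(indexPairs R m) ≤ m ^ 2 / 4 + 1 := by
  set P := indexPairs R m
  have hshort : #{p ∈ P | p.2 = p.1 + 1} ≤ m := by
    calc #{p ∈ P | p.2 = p.1 + 1} ≤ #(range m) := card_le_card_of_injOn Prod.fst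
          (fun p hp => by
            obtain ⟨hpP, hp⟩ := mem_filter.1 hp
            have := mem_indexPairs.1 hpP
            simp only [coe_range, Set.mem_Iio]
            omega)
          (fun p hp q hq hpq => Prod.ext hpq (by
            have := (mem_filter.1 hp).2; have := (mem_filter.1 hq).2; omega))
      _ = m := card_range m
  have hlong : #{p ∈ P | ¬ p.2 = p.1 + 1} ≤ (m - 2) ^ 2 / 4 := by
    refine card_le_sub_two_sq_div_four fun p hp => ?_
    obtain ⟨hpP, hp⟩ := mem_filter.1 hp
    obtain ⟨hlt, hle, hR⟩ := mem_indexPairs.1 hpP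
    have h1 : p.1 ≠ 0 := fun h => hstart p.2 (by omega) hle (h ▸ hR)
    have h2 : p.2 ≠ m := fun h => hend p.1 (by omega) (h ▸ hR)
    refine ⟨by omega, by omega, by omega, fun hq => ?_⟩
    exact hshift p.1 p.2 (by omega) (by omega) hR (mem_indexPairs.1 (mem_filter.1 hq).1).2.2
  calc #P = #{p ∈ P | p.2 = p.1 + 1} + #{p ∈ P | ¬ p.2 = p.1 + 1} :=
        (card_filter_add_card_filter_not _).symm
    _ ≤ m + (m - 2) ^ 2 / 4 := add_le_add hshort hlong
    _ ≤ m ^ 2 / 4 + 1 := add_sub_two_sq_div_four_le m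

namespace SimpleGraph.Walk

variable {V : Type*} {G : SimpleGraph V}

theorem exists_isHamiltonian_of_adj_succ [DecidableEq V] (g : ℕ → V) (m : ℕ)
    (hadj : ∀ k < m, G.Adj (g k) (g (k + 1))) (hinj : Set.InjOn g {i | i ≤ m})
    (hsurj : ∀ x, ∃ i ≤ m, g i = x) :
    ∃ (a b : V) (q : G.Walk a b), q.IsHamiltonian ∧ ∀ k < m, s(g k, g (k + 1)) ∈ q.edges := by
  set l := (List.range (m + 1)).map g
  have hne : l ≠ [] := by simp [l]
  have hchain : l.IsChain G.Adj :=
    (List.isChain_map g).2 ((List.isChain_range_succ _ m).2 hadj)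
  set q := ofSupport l hne hchain
  have hlen : q.length = m := by simp [q, l]
  have hgetVert : ∀ k ≤ m, q.getVert k = g k := by
    intro k hk
    rw [getVert_eq_support_getElem _ (by omega)]
    simp [q, l]
  refine ⟨_, _, q, ?_, fun k hk => ?_⟩
  · refine IsPath.isHamiltonian_of_mem ?_ fun x => ?_
    · rw [← IsPath.getVert_injOn_iff, hlen]
      intro i hi j hj hij
      rw [hgetVert i hi, hgetVert j hj] at hij
      exact hinj hi hj hij
    · obtain ⟨i, hi, rfl⟩ := hsurj x
      rw [← hgetVert i hi]
      exact getVert_mem_support q i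
  · rw [← hgetVert k hk.le, ← hgetVert (k + 1) hk]
    exact (mk_mem_edges_iff_exists q).2 ⟨k, hlen ▸ hk, rfl⟩

theorem IsPath.succ_eq_or_of_mk_mem_edges {u v : V} {w : G.Walk u v} (hw : w.IsPath) {i j : ℕ}
    (hi : i ≤ w.length) (hj : j ≤ w.length) (h : s(w.getVert i, w.getVert j) ∈ w.edges) :
    j = i + 1 ∨ i = j + 1 := by
  obtain ⟨k, hk, hkij⟩ := (mk_mem_edges_iff_exists w).1 h
  have hinj := hw.getVert_injOn
  rcases Sym2.eq_iff.1 hkij with ⟨h1, h2⟩ | ⟨h1, h2⟩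
  · have := hinj (show k ≤ w.length by omega) hi h1
    have := hinj (show k + 1 ≤ w.length by omega) hj h2
    omega
  · have := hinj (show k ≤ w.length by omega) hj h1
    have := hinj (show k + 1 ≤ w.length by omega) hi h2
    omega

theorem IsHamiltonian.ncard_edgeSet_le [DecidableEq V] [DecidableRel G.Adj] {u v : V}
    {w : G.Walk u v} (hw : w.IsHamiltonian) :
    G.edgeSet.ncard ≤ #(indexPairs (fun i j => G.Adj (w.getVert i) (w.getVert j)) w.length) := by
  set P := indexPairs (fun i j => G.Adj (w.getVert i) (w.getVert j)) w.length
  have hsub : G.edgeSet ⊆ ↑(P.image fun p => s(w.getVert p.1, w.getVert p.2)) := by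
    intro e he
    induction e using Sym2.ind with | h x y => ?_
    obtain ⟨i, rfl, hi⟩ := mem_support_iff_exists_getVert.1 (hw.mem_support x)
    obtain ⟨j, rfl, hj⟩ := mem_support_iff_exists_getVert.1 (hw.mem_support y)
    rw [SimpleGraph.mem_edgeSet] at he
    simp only [coe_image, Set.mem_image, mem_coe]
    rcases lt_trichotomy i j with h | rfl | h
    · exact ⟨(i, j), mem_indexPairs.2 ⟨h, hj, he⟩, rfl⟩
    · exact absurd he G.irrefl
    · exact ⟨(j, i), mem_indexPairs.2 ⟨h, hi, he.symm⟩, Sym2.eq_swap⟩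
  calc G.edgeSet.ncard ≤ (↑(P.image fun p => s(w.getVert p.1, w.getVert p.2)) : Set _).ncard :=
        Set.ncard_le_ncard hsub (finite_toSet _)
    _ = #(P.image fun p => s(w.getVert p.1, w.getVert p.2)) := Set.ncard_coe_finset _
    _ ≤ #P := card_image_le

variable [DecidableEq V] {u v : V}

/-- Hamiltonian paths all have the same number of edges, so this says that `w` is the only
hamiltonian path. -/
def IsUniqueHamiltonian (w : G.Walk u v) : Prop :=
  w.IsHamiltonian ∧ ∀ ⦃a b : V⦄ (q : G.Walk a b), q.IsHamiltonian → ∀ e ∈ q.edges, e ∈ w.edges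

namespace IsUniqueHamiltonian

variable {w : G.Walk u v}

/-- `w.getVert ∘ σ` traces a hamiltonian path, whose edges must be edges of `w`. -/
theorem succ_eq_or_of_involutive (hw : w.IsUniqueHamiltonian) (σ : ℕ → ℕ)
    (hσ : ∀ k ≤ w.length, σ k ≤ w.length ∧ σ (σ k) = k)
    (hadj : ∀ k < w.length, G.Adj (w.getVert (σ k)) (w.getVert (σ (k + 1))))
    {k : ℕ} (hk : k < w.length) : σ (k + 1) = σ k + 1 ∨ σ k = σ (k + 1) + 1 := by
  have hinj : Set.InjOn (w.getVert ∘ σ) {i | i ≤ w.length} := fun i hi j hj hij => by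
    rw [← (hσ i hi).2, ← (hσ j hj).2]
    exact congrArg σ (hw.1.isPath.getVert_injOn (hσ i hi).1 (hσ j hj).1 hij)
  have hsurj : ∀ x, ∃ i ≤ w.length, (w.getVert ∘ σ) i = x := fun x => by
    obtain ⟨i, rfl, hi⟩ := mem_support_iff_exists_getVert.1 (hw.1.mem_support x)
    exact ⟨σ i, (hσ i hi).1, by rw [Function.comp_apply, (hσ i hi).2]⟩
  obtain ⟨a, b, q, hq, hqe⟩ := exists_isHamiltonian_of_adj_succ _ _ hadj hinj hsurj
  exact hw.1.isPath.succ_eq_or_of_mk_mem_edges (hσ k hk.le).1 (hσ (k + 1) hk).1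
    (hw.2 q hq _ (hqe k hk))

/-- Reversing the segment `[a, b]` of `w` gives a hamiltonian path as soon as the new junctions
are edges. -/
theorem eq_of_reverse_segment (hw : w.IsUniqueHamiltonian) {a b : ℕ} (hab : a ≤ b)
    (hb : b ≤ w.length)
    (hl : 0 < a → G.Adj (w.getVert (a - 1)) (w.getVert b))
    (hr : b < w.length → G.Adj (w.getVert a) (w.getVert (b + 1)))
    (hne : 0 < a ∨ b < w.length) : a = b := by
  set m := w.length
  set σ : ℕ → ℕ := fun k => if a ≤ k ∧ k ≤ b then a + b - k else k with hσ_def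
  have hσ : ∀ k ≤ m, σ k ≤ m ∧ σ (σ k) = k := by
    intro k hk
    simp only [hσ_def]
    split_ifs <;> omega
  have hsteps : ∀ k < m, ((σ (k + 1) = σ k + 1 ∨ σ k = σ (k + 1) + 1) ∧ σ k ≤ m ∧ σ (k + 1) ≤ m)
      ∨ (0 < a ∧ σ k = a - 1 ∧ σ (k + 1) = b) ∨ (b < m ∧ σ k = a ∧ σ (k + 1) = b + 1) := by
    intro k hk
    simp only [hσ_def]
    split_ifs <;> omega
  have hadj : ∀ k < m, G.Adj (w.getVert (σ k)) (w.getVert (σ (k + 1))) := by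
    intro k hk
    rcases hsteps k hk with ⟨h | h, hle, hle'⟩ | ⟨ha, h1, h2⟩ | ⟨hb, h1, h2⟩
    · rw [h]; exact w.adj_getVert_succ (by omega)
    · rw [h]; exact (w.adj_getVert_succ (by omega)).symm
    · rw [h1, h2]; exact hl ha
    · rw [h1, h2]; exact hr hb
  rcases hne with ha | hb'
  · have h := hw.succ_eq_or_of_involutive σ hσ hadj (k := a - 1) (by omega)
    simp only [hσ_def] at h
    split_ifs at h <;> omega
  · have h := hw.succ_eq_or_of_involutive σ hσ hadj hb'
    simp only [hσ_def] at h
    split_ifs at h <;> omega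

theorem not_adj_start (hw : w.IsUniqueHamiltonian) {j : ℕ} (hj : 2 ≤ j) (hjm : j ≤ w.length) :
    ¬ G.Adj (w.getVert 0) (w.getVert j) := fun h => by
  have := hw.eq_of_reverse_segment (a := 0) (b := j - 1) (by omega) (by omega) (by omega)
    (fun _ => by rwa [Nat.sub_add_cancel (by omega)]) (Or.inr (by omega))
  omega

theorem not_adj_end (hw : w.IsUniqueHamiltonian) {i : ℕ} (hi : i + 2 ≤ w.length) :
    ¬ G.Adj (w.getVert i) (w.getVert w.length) := fun h => by
  have := hw.eq_of_reverse_segment (a := i + 1) (b := w.length) (by omega) le_rfl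
    (fun _ => by rwa [Nat.add_sub_cancel]) (by omega) (Or.inl (by omega))
  omega

theorem not_adj_succ_succ (hw : w.IsUniqueHamiltonian) {i j : ℕ} (hij : i + 2 ≤ j)
    (hj : j < w.length) (h : G.Adj (w.getVert i) (w.getVert j)) :
    ¬ G.Adj (w.getVert (i + 1)) (w.getVert (j + 1)) := fun h' => by
  have := hw.eq_of_reverse_segment (a := i + 1) (b := j) (by omega) hj.le
    (fun _ => by rwa [Nat.add_sub_cancel]) (fun _ => h') (Or.inr hj)
  omega

end IsUniqueHamiltonian

end SimpleGraph.Walk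

namespace SimpleGraph

theorem exists_isUniqueHamiltonian_of_hamPathCount_eq_one {V : Type*} [DecidableEq V]
    {G : SimpleGraph V} (h : hamPathCount G = 1) :
    ∃ (u v : V) (w : G.Walk u v), w.IsUniqueHamiltonian := by
  obtain rfl : ‹DecidableEq V› = Classical.decEq V := Subsingleton.elim _ _
  obtain ⟨s, hs⟩ := Set.ncard_eq_one.1 h
  obtain ⟨u, v, w, hw, rfl⟩ : s ∈ hamPathSets G := hs ▸ rfl
  refine ⟨u, v, w, hw, fun a b q hq e he => ?_⟩
  have hq' : {e | e ∈ q.edges} ∈ hamPathSets G := ⟨a, b, q, hq, rfl⟩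
  rw [hs, Set.mem_singleton_iff] at hq'
  exact (Set.ext_iff.1 hq' e).1 he

end SimpleGraph

theorem stmt15_general {V : Type*} [Fintype V] (G : SimpleGraph V)
    (hut : hamPathCount G = 1) :
    G.edgeSet.ncard ≤ (Fintype.card V - 1) ^ 2 / 4 + 1 := by
  classical
  obtain ⟨u, v, w, hw⟩ := exists_isUniqueHamiltonian_of_hamPathCount_eq_one hut
  rw [← hw.1.length_eq]
  exact hw.1.ncard_edgeSet_le.trans (card_indexPairs_le _ _ (fun _ => hw.not_adj_start)
    (fun _ => hw.not_adj_end) (fun _ _ => hw.not_adj_succ_succ))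

theorem stmt15 {V : Type*} [Fintype V] (G : SimpleGraph V) (hn : 2 ≤ Fintype.card V)
    (hut : hamPathCount G = 1) :
    G.edgeSet.ncard ≤ (Fintype.card V - 1) ^ 2 / 4 + 1 :=
  stmt15_general G hut
end
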